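/- The polynomial F_{S2} := F_{S1}·(x0^9 − x1^3·x2^3·x3^3) + x1^6·x2^6·x3^6 is irreducible in the polynomial ring ℂ[x0, x1, x2, x3], where F_{S1} := x0^9 + (x1^3 − x2^3)·(x2^3 − x3^3)·(x3^3 − x1^3). -/

import Mathlib

open MvPolynomial

/-- The homogeneous degree-9 polynomial defining the surface `S1 ⊂ ℙ³_ℂ`. -/
noncomputable def FS1 : MvPolynomial (Fin 4) ℂ :=
  X 0 ^ 9 + (X 1 ^ 3 - X 2 ^ 3) * (X 2 ^ 3 - X 3 ^ 3) * (X 3 ^ 3 - X 1 ^ 3)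

/-- The homogeneous degree-18 polynomial defining the surface `S2 ⊂ ℙ³_ℂ`. -/
noncomputable def FS2 : MvPolynomial (Fin 4) ℂ :=
  FS1 * (X 0 ^ 9 - X 1 ^ 3 * X 2 ^ 3 * X 3 ^ 3) + X 1 ^ 6 * X 2 ^ 6 * X 3 ^ 6

/-!
As a polynomial in `x0` over `ℂ[x1, x2, x3]`, `F_{S2} = x0¹⁸ + (A - p) x0⁹ + p (p - A)` with
`A = (x1³ - x2³)(x2³ - x3³)(x3³ - x1³)` and `p = (x1 x2 x3)³`. It is Eisenstein at the maximal
ideal of a point `c` with `A(c) = p(c) ≠ 0`, provided `p (p - A)` vanishes only to first order at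
`c`; this is seen on a line through `c`, along which `p (p - A)` has a nonzero linear coefficient.
-/

namespace Polynomial

theorem irreducible_X_pow_add_C_mul_X_pow_add_C {R : Type*} [CommRing R] [IsDomain R]
    {P : Ideal R} (hP : P.IsPrime) {n k : ℕ} (hk : 0 < k) (hkn : k < n) {a b : R}
    (ha : a ∈ P) (hb : b ∈ P) (hb2 : b ∉ P ^ 2) :
    Irreducible (X ^ n + C a * X ^ k + C b : R[X]) := by
  have hlow : (C a * X ^ k + C b : R[X]).degree < n :=
    (degree_add_le _ _).trans_lt <| max_lt
      ((degree_C_mul_X_pow_le k a).trans_lt (by exact_mod_cast hkn))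
      (degree_C_le.trans_lt (by exact_mod_cast hk.trans hkn))
  have hmonic : (X ^ n + C a * X ^ k + C b : R[X]).Monic := by
    rw [add_assoc]
    exact monic_X_pow_add hlow
  have hdeg : (X ^ n + C a * X ^ k + C b : R[X]).natDegree = n := by
    rw [add_assoc, natDegree_add_eq_left_of_degree_lt (by simpa using hlow), natDegree_X_pow]
  refine IsEisensteinAt.irreducible ⟨?_, fun {i} hi => ?_, ?_⟩ hP hmonic.isPrimitive (by omega)
  · rw [hmonic.leadingCoeff]
    exact (Ideal.ne_top_iff_one P).mp hP.ne_top
  · rw [hdeg] at hi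
    simp only [coeff_add, coeff_X_pow, coeff_C_mul, coeff_C]
    split_ifs <;> simp_all
  · simpa [coeff_X_pow, hk.ne, (hk.trans hkn).ne] using hb2

end Polynomial

section Line

variable {R σ : Type*} [CommRing R]

noncomputable def restrictToLine (c v : σ → R) : MvPolynomial σ R →ₐ[R] Polynomial R :=
  aeval fun i => Polynomial.C (c i) + Polynomial.C (v i) * Polynomial.X

theorem eval_zero_restrictToLine (c v : σ → R) (q : MvPolynomial σ R) :
    (restrictToLine c v q).eval 0 = eval c q := by
  suffices (Polynomial.aeval (0 : R)).comp (restrictToLine c v) = aeval c from congr($this q)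
  ext i
  simp [restrictToLine]

theorem X_sq_dvd_restrictToLine_of_mem_ker_eval_sq {c : σ → R} (v : σ → R)
    {q : MvPolynomial σ R} (hq : q ∈ RingHom.ker (eval c) ^ 2) :
    Polynomial.X ^ 2 ∣ restrictToLine c v q := by
  have hker : RingHom.ker (eval c) ≤ (Ideal.span {Polynomial.X}).comap (restrictToLine c v) :=
    fun u hu => by
      rw [Ideal.mem_comap, Ideal.mem_span_singleton, Polynomial.X_dvd_iff,
        Polynomial.coeff_zero_eq_eval_zero, eval_zero_restrictToLine]
      exact hu
  have := Ideal.le_comap_pow _ 2 (Ideal.pow_right_mono hker 2 hq)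
  rwa [Ideal.mem_comap, Ideal.span_singleton_pow, Ideal.mem_span_singleton] at this

end Line

noncomputable def cubeVandermonde : MvPolynomial (Fin 3) ℂ :=
  (X 0 ^ 3 - X 1 ^ 3) * (X 1 ^ 3 - X 2 ^ 3) * (X 2 ^ 3 - X 0 ^ 3)

noncomputable def prodCubes : MvPolynomial (Fin 3) ℂ :=
  X 0 ^ 3 * X 1 ^ 3 * X 2 ^ 3

theorem finSuccEquiv_FS2 :
    finSuccEquiv ℂ 3 FS2 = Polynomial.X ^ 18 + Polynomial.C (cubeVandermonde - prodCubes) *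
      Polynomial.X ^ 9 + Polynomial.C (prodCubes * (prodCubes - cubeVandermonde)) := by
  simp only [FS2, FS1, cubeVandermonde, prodCubes, map_add, map_mul, map_sub, map_pow,
    finSuccEquiv_X_zero, show (1 : Fin 4) = Fin.succ 0 from rfl,
    show (2 : Fin 4) = Fin.succ 1 from rfl, show (3 : Fin 4) = Fin.succ 2 from rfl,
    finSuccEquiv_X_succ]
  ring

-- On `x1 = 1`, `x2³ = 2`, the equation `A = p` reads `s² - 5s + 2 = 0` in `s = x3³`.
theorem exists_cube_eq_two_and_cube_isRoot_quadratic :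
    ∃ c₂ c₃ : ℂ, c₂ ^ 3 = 2 ∧ (c₃ ^ 3) ^ 2 - 5 * c₃ ^ 3 + 2 = 0 := by
  obtain ⟨s, hs⟩ :=
    IsAlgClosed.exists_root (Polynomial.X ^ 2 - 5 * Polynomial.X + 2 : Polynomial ℂ)
      (ne_of_eq_of_ne (by compute_degree! : _ = (2 : WithBot ℕ)) (by decide))
  obtain ⟨c₂, hc₂⟩ := IsAlgClosed.exists_pow_nat_eq (2 : ℂ) (n := 3) (by norm_num)
  obtain ⟨c₃, rfl⟩ := IsAlgClosed.exists_pow_nat_eq s (n := 3) (by norm_num)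
  exact ⟨c₂, c₃, hc₂, by simpa using hs⟩

section Point

variable {c₂ c₃ : ℂ} (hc₂ : c₂ ^ 3 = 2) (hc₃ : (c₃ ^ 3) ^ 2 - 5 * c₃ ^ 3 + 2 = 0)
include hc₂ hc₃

theorem eval_cubeVandermonde_sub_prodCubes :
    eval ![1, c₂, c₃] (cubeVandermonde - prodCubes) = 0 := by
  simp only [cubeVandermonde, prodCubes, map_sub, map_mul, map_pow, eval_X, Matrix.cons_val_zero,
    Matrix.cons_val_one, Matrix.cons_val, hc₂]
  linear_combination hc₃

theorem coeff_one_restrictToLine_prodCubes_mul :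
    (restrictToLine ![1, c₂, c₃] ![0, 1, 0]
      (prodCubes * (prodCubes - cubeVandermonde))).coeff 1 = -6 * c₂ ^ 2 * c₃ ^ 3 := by
  rw [← Polynomial.taylor_zero (f := restrictToLine _ _ _), Polynomial.taylor_coeff_one]
  simp only [restrictToLine, cubeVandermonde, prodCubes, map_mul, map_sub, map_pow, aeval_X,
    Matrix.cons_val_zero, Matrix.cons_val_one, Matrix.cons_val, map_one, map_zero, zero_mul,
    add_zero, one_mul, one_pow, Polynomial.derivative_mul, Polynomial.derivative_pow,
    Polynomial.derivative_add, Polynomial.derivative_C, Polynomial.derivative_X,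
    Polynomial.derivative_one, Polynomial.eval_add, Polynomial.eval_sub, Polynomial.eval_mul,
    Polynomial.eval_pow, Polynomial.eval_C, Polynomial.eval_X, Polynomial.eval_one,
    Polynomial.eval_zero, hc₂]
  linear_combination -9 * c₂ ^ 2 * c₃ ^ 3 * hc₃

theorem prodCubes_mul_notMem_ker_eval_sq :
    prodCubes * (prodCubes - cubeVandermonde) ∉ RingHom.ker (eval ![1, c₂, c₃]) ^ 2 := by
  intro hmem
  have hcoeff := Polynomial.X_pow_dvd_iff.mp
    (X_sq_dvd_restrictToLine_of_mem_ker_eval_sq ![0, 1, 0] hmem) 1 one_lt_two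
  rw [coeff_one_restrictToLine_prodCubes_mul hc₂ hc₃] at hcoeff
  have hc₂0 : c₂ ≠ 0 := by rintro rfl; norm_num at hc₂
  have hc₃0 : c₃ ≠ 0 := by rintro rfl; norm_num at hc₃
  simp_all

end Point

theorem stmt_1 : Irreducible FS2 := by
  obtain ⟨c₂, c₃, hc₂, hc₃⟩ := exists_cube_eq_two_and_cube_isRoot_quadratic
  have hmem : cubeVandermonde - prodCubes ∈ RingHom.ker (eval ![1, c₂, c₃]) :=
    eval_cubeVandermonde_sub_prodCubes hc₂ hc₃
  rw [← MulEquiv.irreducible_iff (finSuccEquiv ℂ 3).toMulEquiv]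
  change Irreducible (finSuccEquiv ℂ 3 FS2)
  rw [finSuccEquiv_FS2]
  exact Polynomial.irreducible_X_pow_add_C_mul_X_pow_add_C (RingHom.ker_isPrime _)
    (show 0 < 9 by norm_num) (show 9 < 18 by norm_num) hmem
    (by simpa only [neg_sub] using Ideal.mul_mem_left _ prodCubes (neg_mem hmem))
    (prodCubes_mul_notMem_ker_eval_sq hc₂ hc₃)
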